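/- Coherent feedback realization of BAE measurements: let Ω_-, Ω_+ ∈ ℂ^{n×n}, k_11, k_12 ∈ ℂ^{m1×n}, k_21, k_22 ∈ ℂ^{m2×n}, S_11 ∈ ℂ^{m1×m1}, S_12 ∈ ℂ^{m1×m2}, S_21 ∈ ℂ^{m2×m1}, S_22 ∈ ℂ^{m2×m2}, and beamsplitter matrix S_b ∈ ℂ^{m2×m2} with I - S_22·S_b invertible. Define the reduced parameters of the feedback network: C̄_- = k_11 + S_12·S_b·(I - S_22·S_b)^{-1}·k_21, C̄_+ = k_12 + S_12·S_b·(I - S_22·S_b)^{-1}·k_22, Ω̄_- = Ω_- - i·(k_11†·S_b·k_21 - k_21†·S_b†·k_11), Ω̄_+ = Ω_+ - i·(k_11†·S_b·k_22 - k_21†·S_b†·k_12), and S_red = S_11 + S_12·S_b·(I - S_22·S_b)^{-1}·S_21. Suppose Ω̄_- is Hermitian, Ω̄_+ is symmetric, both Ω̄_- and Ω̄_+ are purely imaginary, S_red is real, and C̄_-, C̄_+ are either both real or both purely imaginary. Then the quadrature transfer function G[s] of the reduced linear quantum system with parameters (S_red, C̄_-, C̄_+, Ω̄_-, Ω̄_+)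 satisfies G_qp[s] = 0 and G_pq[s] = 0 for every s ∈ ℂ with s·I_{2n} - A invertible, i.e., bilateral BAE measurements are realized by the coherent feedback network. -/
import Mathlib


open Matrix Complex

noncomputable section

/-- Entrywise real part of a complex matrix, viewed as a complex matrix. -/
def reM {α β : Type*} (M : Matrix α β ℂ) : Matrix α β ℂ :=
  M.map fun z => (z.re : ℂ)

/-- Entrywise imaginary part of a complex matrix, viewed as a complex matrix. -/
def imM {α β : Type*} (M : Matrix α β ℂ) : Matrix α β ℂ :=
  M.map fun z => (z.im : ℂ)

/-- The quadrature scattering matrix `D = [[Re S, -Im S],[Im S, Re S]]`. -/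
def QD {m : ℕ} (S : Matrix (Fin m) (Fin m) ℂ) :
    Matrix (Fin m ⊕ Fin m) (Fin m ⊕ Fin m) ℂ :=
  fromBlocks (reM S) (-(imM S)) (imM S) (reM S)

/-- The quadrature coupling matrix
`C = [[Re(C₋+C₊), -Im(C₋-C₊)],[Im(C₋+C₊), Re(C₋-C₊)]]`. -/
def QC {m n : ℕ} (Cm Cp : Matrix (Fin m) (Fin n) ℂ) :
    Matrix (Fin m ⊕ Fin m) (Fin n ⊕ Fin n) ℂ :=
  fromBlocks (reM (Cm + Cp)) (-(imM (Cm - Cp))) (imM (Cm + Cp)) (reM (Cm - Cp))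

/-- The quadrature input matrix
`B = -[[Re(C₋†-C₊†), -Im(C₋†-C₊†)],[Im(C₋†+C₊†), Re(C₋†+C₊†)]] · D`. -/
def QB {m n : ℕ} (Cm Cp : Matrix (Fin m) (Fin n) ℂ) (S : Matrix (Fin m) (Fin m) ℂ) :
    Matrix (Fin n ⊕ Fin n) (Fin m ⊕ Fin m) ℂ :=
  -(fromBlocks (reM (Cmᴴ - Cpᴴ)) (-(imM (Cmᴴ - Cpᴴ)))
      (imM (Cmᴴ + Cpᴴ)) (reM (Cmᴴ + Cpᴴ)) * QD S)

/-- `JH = [[Im(Ω₋+Ω₊), Re(Ω₋-Ω₊)],[-Re(Ω₋+Ω₊), Im(Ω₋-Ω₊)]]`. -/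
def QJH {n : ℕ} (Om Op : Matrix (Fin n) (Fin n) ℂ) :
    Matrix (Fin n ⊕ Fin n) (Fin n ⊕ Fin n) ℂ :=
  fromBlocks (imM (Om + Op)) (reM (Om - Op)) (-(reM (Om + Op))) (imM (Om - Op))

/-- `𝕁ₖ = [[0, Iₖ],[-Iₖ, 0]]`. -/
def QJ (k : ℕ) : Matrix (Fin k ⊕ Fin k) (Fin k ⊕ Fin k) ℂ :=
  fromBlocks 0 1 (-1) 0

/-- `C♯ = -𝕁ₙ · C† · 𝕁ₘ`. -/
def QCsharp {m n : ℕ} (Cm Cp : Matrix (Fin m) (Fin n) ℂ) :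
    Matrix (Fin n ⊕ Fin n) (Fin m ⊕ Fin m) ℂ :=
  -(QJ n * (QC Cm Cp)ᴴ * QJ m)

/-- `A = JH - (1/2) · C♯ · C`. -/
def QA {m n : ℕ} (Cm Cp : Matrix (Fin m) (Fin n) ℂ) (Om Op : Matrix (Fin n) (Fin n) ℂ) :
    Matrix (Fin n ⊕ Fin n) (Fin n ⊕ Fin n) ℂ :=
  QJH Om Op - (1/2 : ℂ) • (QCsharp Cm Cp * QC Cm Cp)

/-- The quadrature transfer function `G[s] = D + C (sI - A)⁻¹ B`. -/
def QG {m n : ℕ} (Cm Cp : Matrix (Fin m) (Fin n) ℂ) (Om Op : Matrix (Fin n) (Fin n) ℂ)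
    (S : Matrix (Fin m) (Fin m) ℂ) (s : ℂ) :
    Matrix (Fin m ⊕ Fin m) (Fin m ⊕ Fin m) ℂ :=
  QD S + QC Cm Cp *
    (s • (1 : Matrix (Fin n ⊕ Fin n) (Fin n ⊕ Fin n) ℂ) - QA Cm Cp Om Op)⁻¹ * QB Cm Cp S

/- In the coherent feedback network the two groups of channels have sizes m1 and m2.
The reduced Hamiltonian correction k11† · S_b · k21 is dimensionally consistent only
when m1 = m2, so we formalize with a single channel-group size m (= m1 = m2). -/

/-- The reduced coupling matrix C̄₋ = k11 + S12·S_b·(I - S22·S_b)⁻¹·k21. -/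
def redCm {n m : ℕ} (k11 k21 : Matrix (Fin m) (Fin n) ℂ)
    (S12 S22 Sb : Matrix (Fin m) (Fin m) ℂ) : Matrix (Fin m) (Fin n) ℂ :=
  k11 + S12 * Sb * (1 - S22 * Sb)⁻¹ * k21

/-- The reduced coupling matrix C̄₊ = k12 + S12·S_b·(I - S22·S_b)⁻¹·k22. -/
def redCp {n m : ℕ} (k12 k22 : Matrix (Fin m) (Fin n) ℂ)
    (S12 S22 Sb : Matrix (Fin m) (Fin m) ℂ) : Matrix (Fin m) (Fin n) ℂ :=
  k12 + S12 * Sb * (1 - S22 * Sb)⁻¹ * k22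

/-- The reduced Hamiltonian matrix Ω̄₋ = Ω₋ - i·(k11†·S_b·k21 - k21†·S_b†·k11). -/
def redOm {n m : ℕ} (Om : Matrix (Fin n) (Fin n) ℂ)
    (k11 k21 : Matrix (Fin m) (Fin n) ℂ) (Sb : Matrix (Fin m) (Fin m) ℂ) :
    Matrix (Fin n) (Fin n) ℂ :=
  Om - Complex.I • (k11ᴴ * Sb * k21 - k21ᴴ * Sbᴴ * k11)

/-- The reduced Hamiltonian matrix Ω̄₊ = Ω₊ - i·(k11†·S_b·k22 - k21†·S_b†·k12). -/
def redOp {n m : ℕ} (Op : Matrix (Fin n) (Fin n) ℂ)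
    (k11 k12 k21 k22 : Matrix (Fin m) (Fin n) ℂ) (Sb : Matrix (Fin m) (Fin m) ℂ) :
    Matrix (Fin n) (Fin n) ℂ :=
  Op - Complex.I • (k11ᴴ * Sb * k22 - k21ᴴ * Sbᴴ * k12)

/-- The reduced scattering matrix S_red = S11 + S12·S_b·(I - S22·S_b)⁻¹·S21. -/
def redS {m : ℕ} (S11 S12 S21 S22 Sb : Matrix (Fin m) (Fin m) ℂ) :
    Matrix (Fin m) (Fin m) ℂ :=
  S11 + S12 * Sb * (1 - S22 * Sb)⁻¹ * S21

lemma reM_add {α β : Type*} (A B : Matrix α β ℂ) : reM (A + B) = reM A + reM B := by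
  ext i j; simp [reM]
lemma reM_sub {α β : Type*} (A B : Matrix α β ℂ) : reM (A - B) = reM A - reM B := by
  ext i j; simp [reM]
lemma imM_add {α β : Type*} (A B : Matrix α β ℂ) : imM (A + B) = imM A + imM B := by
  ext i j; simp [imM]
lemma imM_sub {α β : Type*} (A B : Matrix α β ℂ) : imM (A - B) = imM A - imM B := by
  ext i j; simp [imM]
lemma reM_ct {α β : Type*} [Fintype α] [Fintype β] (A : Matrix α β ℂ) :
    reM (Aᴴ) = (reM A)ᵀ := by
  ext i j; simp [reM, conjTranspose_apply]
lemma imM_ct {α β : Type*} [Fintype α] [Fintype β] (A : Matrix α β ℂ) :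
    imM (Aᴴ) = -(imM A)ᵀ := by
  ext i j; simp [imM, conjTranspose_apply]

def Sg (k : ℕ) : Matrix (Fin k ⊕ Fin k) (Fin k ⊕ Fin k) ℂ := fromBlocks 1 0 0 (-1)

lemma Sg_sq (k : ℕ) : Sg k * Sg k = 1 := by
  simp [Sg, fromBlocks_multiply, ← fromBlocks_one]

lemma Sg_conj {k l : ℕ} (A : Matrix (Fin k) (Fin l) ℂ) (B : Matrix (Fin k) (Fin l) ℂ)
    (C : Matrix (Fin k) (Fin l) ℂ) (D : Matrix (Fin k) (Fin l) ℂ) :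
    Sg k * fromBlocks A B C D * Sg l = fromBlocks A (-B) (-C) D := by
  simp [Sg, fromBlocks_multiply]

lemma Sg_herm (k : ℕ) : (Sg k)ᴴ = Sg k := by
  simp [Sg, fromBlocks_conjTranspose]

lemma Sg_inv (k : ℕ) : (Sg k)⁻¹ = Sg k := Matrix.inv_eq_left_inv (Sg_sq k)

lemma Sg_conj_mul {k l p : ℕ} (X : Matrix (Fin k ⊕ Fin k) (Fin l ⊕ Fin l) ℂ)
    (Y : Matrix (Fin l ⊕ Fin l) (Fin p ⊕ Fin p) ℂ) :
    Sg k * (X * Y) * Sg p = (Sg k * X * Sg l) * (Sg l * Y * Sg p) := by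
  simp only [Matrix.mul_assoc]
  congr 1
  congr 1
  rw [← Matrix.mul_assoc, ← Matrix.mul_assoc, Matrix.mul_assoc (Sg l) (Sg l), ← Matrix.mul_assoc (Sg l) (Sg l), Sg_sq, Matrix.one_mul]

lemma key {m n : ℕ} (Cm Cp : Matrix (Fin m) (Fin n) ℂ) (Om Op : Matrix (Fin n) (Fin n) ℂ)
    (S : Matrix (Fin m) (Fin m) ℂ)
    (hOm : reM Om = 0) (hOp : reM Op = 0) (hS : imM S = 0)
    (hC : (imM Cm = 0 ∧ imM Cp = 0) ∨ (reM Cm = 0 ∧ reM Cp = 0)) (s : ℂ) :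
    (QG Cm Cp Om Op S s).toBlocks₁₂ = 0 ∧ (QG Cm Cp Om Op S s).toBlocks₂₁ = 0 := by
  -- the scattering matrix is even
  have hD : Sg m * QD S * Sg m = QD S := by
    rw [QD, Sg_conj, hS]; simp
  -- parity of the coupling and input matrices
  obtain ⟨ε, hε2, hεs, hCpar, hBpar⟩ :
      ∃ ε : ℂ, ε * ε = 1 ∧ star ε = ε ∧
        Sg m * QC Cm Cp * Sg n = ε • QC Cm Cp ∧
        Sg n * QB Cm Cp S * Sg m = ε • QB Cm Cp S := by
    rcases hC with ⟨h1, h2⟩ | ⟨h1, h2⟩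
    · refine ⟨1, by ring, by simp, ?_, ?_⟩
      · rw [QC, Sg_conj, imM_add, imM_sub, h1, h2]; simp
      · rw [QB]
        have hF : Sg n * fromBlocks (reM (Cmᴴ - Cpᴴ)) (-(imM (Cmᴴ - Cpᴴ)))
            (imM (Cmᴴ + Cpᴴ)) (reM (Cmᴴ + Cpᴴ)) * Sg m =
            fromBlocks (reM (Cmᴴ - Cpᴴ)) (-(imM (Cmᴴ - Cpᴴ)))
            (imM (Cmᴴ + Cpᴴ)) (reM (Cmᴴ + Cpᴴ)) := by
          rw [Sg_conj, imM_add, imM_sub, imM_ct, imM_ct, h1, h2]; simp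
        rw [Matrix.mul_neg, Matrix.neg_mul, Sg_conj_mul, hF, hD, one_smul]
    · refine ⟨-1, by ring, by simp, ?_, ?_⟩
      · rw [QC, Sg_conj, reM_add, reM_sub, h1, h2]
        simp [fromBlocks_neg, fromBlocks_smul]
      · rw [QB]
        have hF : Sg n * fromBlocks (reM (Cmᴴ - Cpᴴ)) (-(imM (Cmᴴ - Cpᴴ)))
            (imM (Cmᴴ + Cpᴴ)) (reM (Cmᴴ + Cpᴴ)) * Sg m =
            (-1 : ℂ) • fromBlocks (reM (Cmᴴ - Cpᴴ)) (-(imM (Cmᴴ - Cpᴴ)))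
            (imM (Cmᴴ + Cpᴴ)) (reM (Cmᴴ + Cpᴴ)) := by
          rw [Sg_conj, reM_add, reM_sub, reM_ct, reM_ct, h1, h2]
          simp [fromBlocks_neg, fromBlocks_smul]
        rw [Matrix.mul_neg, Matrix.neg_mul, Sg_conj_mul, hF, hD]
        simp [Matrix.smul_mul]
  -- conjugate-transpose parity of the coupling matrix
  have hCherm : Sg n * (QC Cm Cp)ᴴ * Sg m = ε • (QC Cm Cp)ᴴ := by
    have h := congrArg conjTranspose hCpar
    simp only [conjTranspose_mul, conjTranspose_smul, Sg_herm, hεs] at h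
    rw [← Matrix.mul_assoc] at h
    exact h
  -- parity of QJ
  have hJ : ∀ k : ℕ, Sg k * QJ k * Sg k = -QJ k := by
    intro k
    rw [QJ, Sg_conj]
    simp [fromBlocks_neg]
  -- parity of C♯
  have hCsh : Sg n * QCsharp Cm Cp * Sg m = ε • QCsharp Cm Cp := by
    rw [QCsharp, Matrix.mul_neg, Matrix.neg_mul, Matrix.mul_assoc (QJ n),
      Sg_conj_mul, Sg_conj_mul, hJ, hJ, hCherm]
    simp only [Matrix.neg_mul, Matrix.mul_neg, Matrix.smul_mul, Matrix.mul_smul,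
      neg_neg, smul_neg, Matrix.mul_assoc]
  -- JH is even
  have hsum : reM (Om + Op) = 0 := by rw [reM_add, hOm, hOp, add_zero]
  have hdiff : reM (Om - Op) = 0 := by rw [reM_sub, hOm, hOp, sub_zero]
  have hJH : Sg n * QJH Om Op * Sg n = QJH Om Op := by
    rw [QJH, Sg_conj, hsum, hdiff]; simp
  -- A is even
  have hA : Sg n * QA Cm Cp Om Op * Sg n = QA Cm Cp Om Op := by
    rw [QA, Matrix.mul_sub, Matrix.sub_mul, hJH, Matrix.mul_smul, Matrix.smul_mul,
      Sg_conj_mul, hCsh, hCpar]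
    rw [Matrix.smul_mul, Matrix.mul_smul, smul_smul, smul_smul, mul_assoc, hε2, mul_one]
  -- sI - A is even, hence so is its inverse
  set M := s • (1 : Matrix (Fin n ⊕ Fin n) (Fin n ⊕ Fin n) ℂ) - QA Cm Cp Om Op with hMdef
  have hM : Sg n * M * Sg n = M := by
    rw [hMdef, Matrix.mul_sub, Matrix.sub_mul, hA, Matrix.mul_smul, Matrix.smul_mul,
      Matrix.mul_one, Sg_sq]
  have hMinv : Sg n * M⁻¹ * Sg n = M⁻¹ := by
    conv_rhs => rw [← hM]
    rw [Matrix.mul_inv_rev, Matrix.mul_inv_rev, Sg_inv, Matrix.mul_assoc]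
  -- G is even
  have hG : Sg m * QG Cm Cp Om Op S s * Sg m = QG Cm Cp Om Op S s := by
    rw [QG, ← hMdef, Matrix.mul_add, Matrix.add_mul, hD, Matrix.mul_assoc (QC Cm Cp),
      Sg_conj_mul, Sg_conj_mul, hCpar, hMinv, hBpar]
    simp only [Matrix.smul_mul, Matrix.mul_smul, smul_smul]
    rw [hε2, one_smul]
  -- extract the off-diagonal blocks
  set G := QG Cm Cp Om Op S s with hGdef
  rw [← fromBlocks_toBlocks G, Sg_conj] at hG
  constructor
  · have h12 := congrArg Matrix.toBlocks₁₂ hG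
    simp only [toBlocks_fromBlocks₁₂] at h12
    have : G.toBlocks₁₂ + G.toBlocks₁₂ = 0 := by
      nth_rewrite 1 [← h12]; exact neg_add_cancel _
    ext i j
    have h := congrFun (congrFun this i) j
    simp only [Matrix.add_apply, Matrix.zero_apply] at h
    have : (2 : ℂ) * G.toBlocks₁₂ i j = 0 := by rw [two_mul]; exact h
    simpa using this
  · have h21 := congrArg Matrix.toBlocks₂₁ hG
    simp only [toBlocks_fromBlocks₂₁] at h21
    have : G.toBlocks₂₁ + G.toBlocks₂₁ = 0 := by
      nth_rewrite 1 [← h21]; exact neg_add_cancel _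
    ext i j
    have h := congrFun (congrFun this i) j
    simp only [Matrix.add_apply, Matrix.zero_apply] at h
    have : (2 : ℂ) * G.toBlocks₂₁ i j = 0 := by rw [two_mul]; exact h
    simpa using this

/-- if the reduced parameters of the coherent feedback network satisfy
Ω̄₋ Hermitian, Ω̄₊ symmetric, Ω̄₋, Ω̄₊ purely imaginary, S_red real, and C̄₋, C̄₊
both real or both purely imaginary, then bilateral BAE measurements are realized:
G_qp[s] = 0 and G_pq[s] = 0 for every admissible s. -/
theorem stmt13 {n m : ℕ}
    (Om Op : Matrix (Fin n) (Fin n) ℂ)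
    (k11 k12 k21 k22 : Matrix (Fin m) (Fin n) ℂ)
    (S11 S12 S21 S22 Sb : Matrix (Fin m) (Fin m) ℂ)
    (hInv : IsUnit ((1 : Matrix (Fin m) (Fin m) ℂ) - S22 * Sb))
    (hOmHerm : (redOm Om k11 k21 Sb)ᴴ = redOm Om k11 k21 Sb)
    (hOpSymm : (redOp Op k11 k12 k21 k22 Sb)ᵀ = redOp Op k11 k12 k21 k22 Sb)
    (hOm : reM (redOm Om k11 k21 Sb) = 0)
    (hOp : reM (redOp Op k11 k12 k21 k22 Sb) = 0)
    (hS : imM (redS S11 S12 S21 S22 Sb) = 0)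
    (hC : (imM (redCm k11 k21 S12 S22 Sb) = 0 ∧ imM (redCp k12 k22 S12 S22 Sb) = 0) ∨
          (reM (redCm k11 k21 S12 S22 Sb) = 0 ∧ reM (redCp k12 k22 S12 S22 Sb) = 0))
    (s : ℂ)
    (hs : IsUnit (s • (1 : Matrix (Fin n ⊕ Fin n) (Fin n ⊕ Fin n) ℂ) -
      QA (redCm k11 k21 S12 S22 Sb) (redCp k12 k22 S12 S22 Sb)
        (redOm Om k11 k21 Sb) (redOp Op k11 k12 k21 k22 Sb))) :
    (QG (redCm k11 k21 S12 S22 Sb) (redCp k12 k22 S12 S22 Sb)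
        (redOm Om k11 k21 Sb) (redOp Op k11 k12 k21 k22 Sb)
        (redS S11 S12 S21 S22 Sb) s).toBlocks₁₂ = 0 ∧
    (QG (redCm k11 k21 S12 S22 Sb) (redCp k12 k22 S12 S22 Sb)
        (redOm Om k11 k21 Sb) (redOp Op k11 k12 k21 k22 Sb)
        (redS S11 S12 S21 S22 Sb) s).toBlocks₂₁ = 0 := by
  exact key _ _ _ _ _ hOm hOp hS hC s
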